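/- arXiv:1112.0520 — 5 statements merged into one kernel-verified Lean document; each statement's English description precedes it below -/
import Mathlib

section
/- Let n ≥ 1, let X[1..n] be a sorted nondecreasing list of nonnegative real numbers with X[n] > 0, and let δ ∈ (0,1). Suppose there are t ≥ 1 intervals R_i = [r_i, r'_i] (1 ≤ i ≤ t) with r'_1 = n, r_i ≤ r'_i, and r'_{i+1} = r_i − 1 for 1 ≤ i < t, and thresholds b_i = X[r'_i]/(1+δ), such that each R_i is a (1+δ)-approximate b_i-region of the sublist X[1..r'_i], and X[j] < δ·X[n]/(3n) for every index j < r_t. Then s = Σ_{i=1}^t (r'_i − r_i + 1)·b_i satisfies ((1 − δ/3)/(1+δ))·Σ_{j=1}^n X[j] ≤ s ≤ (1+δ)·Σ_{j=1}^n X[j]. -/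
/-- `R = [s, n']` is a `(1+δ)`-approximate `b`-region of the sorted list `X[1..n']`:
it ends at the last position `n'`, at least `|R|/(1+δ)` of the indices `j ∈ R`
satisfy `X j ≥ b`, and `R` contains every index `j ∈ [1, n']` with `X j ≥ b`. -/
def IsApproxRegion (X : ℕ → ℝ) (n' : ℕ) (b δ : ℝ) (s : ℕ) : Prop :=
  1 ≤ s ∧ s ≤ n' ∧
  ((n' : ℝ) - s + 1) / (1 + δ) ≤ ((Finset.Icc s n').filter (fun j => b ≤ X j)).card ∧
  ∀ j, 1 ≤ j → j ≤ n' → b ≤ X j → s ≤ j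

/-!
The regions `R_i` tile `[r_t, n]`; write `S` for the sum of `X` over them. On `R_i`, sortedness
gives `∑_{R_i} X ≤ |R_i| X[r'_i] = (1+δ) |R_i| b_i`, while at least `|R_i|/(1+δ)` entries are
`≥ b_i`, so `|R_i| b_i ≤ (1+δ) ∑_{R_i} X`. Summing, `S/(1+δ) ≤ s ≤ (1+δ) S`. The fewer than `n`
entries before `r_t` are each below `δ X[n]/(3n)`, so they contribute at most `δ/3` of the total,
whence `S ≥ (1 - δ/3) ∑ X`.
-/

open Finset

theorem Finset.card_filter_mul_le_sum {ι : Type*} (s : Finset ι) (f : ι → ℝ) (b : ℝ)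
    (hf : ∀ i ∈ s, 0 ≤ f i) : #(s.filter (b ≤ f ·)) * b ≤ ∑ i ∈ s, f i := by
  calc #(s.filter (b ≤ f ·)) * b ≤ ∑ i ∈ s.filter (b ≤ f ·), f i := by
        simpa only [nsmul_eq_mul] using card_nsmul_le_sum _ f b fun i hi => (mem_filter.mp hi).2
    _ ≤ ∑ i ∈ s, f i :=
        sum_le_sum_of_subset_of_nonneg (filter_subset _ s) fun i hi _ => hf i hi

theorem Nat.cast_card_Icc_real {a b : ℕ} (h : a ≤ b + 1) : (#(Icc a b) : ℝ) = b - a + 1 := by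
  rw [Nat.card_Icc, Nat.cast_sub h]
  push_cast
  ring

theorem IsApproxRegion.length_mul_le_sum {X : ℕ → ℝ} {n' : ℕ} {b δ : ℝ} {s : ℕ}
    (hR : IsApproxRegion X n' b δ s) (hb : 0 ≤ b) (hδ : 0 < 1 + δ)
    (hX : ∀ j ∈ Icc s n', 0 ≤ X j) :
    ((n' : ℝ) - s + 1) * b ≤ (1 + δ) * ∑ j ∈ Icc s n', X j := by
  obtain ⟨-, -, hcount, -⟩ := hR
  have hlen : (n' : ℝ) - s + 1 ≤ (1 + δ) * #((Icc s n').filter (b ≤ X ·)) := by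
    rwa [div_le_iff₀ hδ, mul_comm] at hcount
  calc ((n' : ℝ) - s + 1) * b ≤ (1 + δ) * #((Icc s n').filter (b ≤ X ·)) * b :=
        mul_le_mul_of_nonneg_right hlen hb
    _ = (1 + δ) * (#((Icc s n').filter (b ≤ X ·)) * b) := mul_assoc _ _ _
    _ ≤ (1 + δ) * ∑ j ∈ Icc s n', X j :=
        mul_le_mul_of_nonneg_left (card_filter_mul_le_sum _ X b hX) hδ.le

theorem sum_Icc_le_length_mul_right {X : ℕ → ℝ} {a b : ℕ} (hab : a ≤ b + 1)
    (hX : ∀ j ∈ Icc a b, X j ≤ X b) : ∑ j ∈ Icc a b, X j ≤ ((b : ℝ) - a + 1) * X b := by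
  simpa only [nsmul_eq_mul, Nat.cast_card_Icc_real hab] using sum_le_card_nsmul _ X _ hX

section Consecutive

variable {r r' : ℕ → ℕ} {k : ℕ}

theorem right_end_le_of_consecutive (hle : ∀ i, 1 ≤ i → i ≤ k → r i ≤ r' i + 1)
    (hnext : ∀ i, 1 ≤ i → i < k → r' (i + 1) + 1 = r i) :
    ∀ i, 1 ≤ i → i ≤ k → r' i ≤ r' 1 := by
  intro i hi
  induction i, hi using Nat.le_induction with
  | base => exact fun _ => le_rfl
  | succ i hi ih =>
    intro (hik : i < k)
    have := hnext i hi hik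
    have := hle i hi hik.le
    have := ih hik.le
    omega

theorem sum_Icc_of_consecutive {M : Type*} [AddCommMonoid M] (f : ℕ → M) (hk : 1 ≤ k)
    (hle : ∀ i, 1 ≤ i → i ≤ k → r i ≤ r' i + 1)
    (hnext : ∀ i, 1 ≤ i → i < k → r' (i + 1) + 1 = r i) :
    ∑ i ∈ Icc 1 k, ∑ j ∈ Icc (r i) (r' i), f j = ∑ j ∈ Icc (r k) (r' 1), f j := by
  induction k, hk using Nat.le_induction with
  | base => rw [Icc_self, sum_singleton]
  | succ k hk ih =>
    have hlast := hnext k hk (Nat.lt_succ_self k)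
    have hrk : r k ≤ r' 1 + 1 := (hle k hk k.le_succ).trans
      (Nat.succ_le_succ (right_end_le_of_consecutive hle hnext k hk k.le_succ))
    rw [sum_Icc_succ_top (by omega), ih (fun i h1 h2 => hle i h1 (h2.trans k.le_succ))
      (fun i h1 h2 => hnext i h1 (h2.trans k.lt_succ_self)), add_comm,
      ← Ico_add_one_right_eq_Icc, ← Ico_add_one_right_eq_Icc, ← Ico_add_one_right_eq_Icc, hlast,
      sum_Ico_consecutive _ (by have := hle (k + 1) (by omega) le_rfl; omega) hrk]

end Consecutive

theorem sum_Ico_one_le_of_le_div {X : ℕ → ℝ} {m n : ℕ} {ε : ℝ} (hmn : m ≤ n + 1) (hn : 1 ≤ n)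
    (hε : 0 ≤ ε) (hX : ∀ j ∈ Ico 1 m, X j ≤ ε / n) : ∑ j ∈ Ico 1 m, X j ≤ ε := by
  have hn' : (0 : ℝ) < n := by exact_mod_cast hn
  calc ∑ j ∈ Ico 1 m, X j ≤ #(Ico 1 m) * (ε / n) := by
        simpa only [nsmul_eq_mul] using sum_le_card_nsmul _ X _ hX
    _ ≤ n * (ε / n) := by
        gcongr
        rw [Nat.card_Ico]
        exact_mod_cast (by omega : m - 1 ≤ n)
    _ = ε := mul_div_cancel₀ ε hn'.ne'

theorem one_sub_mul_sum_Icc_le {X : ℕ → ℝ} {m n : ℕ} {ε : ℝ} (hn : 1 ≤ n) (hm : 1 ≤ m)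
    (hmn : m ≤ n + 1) (hε : 0 ≤ ε) (hX : ∀ j ∈ Icc 1 n, 0 ≤ X j)
    (hhead : ∀ j ∈ Ico 1 m, X j ≤ ε * X n / n) :
    (1 - ε) * ∑ j ∈ Icc 1 n, X j ≤ ∑ j ∈ Icc m n, X j := by
  have hsplit : ∑ j ∈ Ico 1 m, X j + ∑ j ∈ Icc m n, X j = ∑ j ∈ Icc 1 n, X j := by
    simp only [← Ico_add_one_right_eq_Icc]
    exact sum_Ico_consecutive X hm hmn
  have hXn : X n ≤ ∑ j ∈ Icc 1 n, X j := single_le_sum hX (mem_Icc.mpr ⟨hn, le_rfl⟩)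
  have hhead_le : ∑ j ∈ Ico 1 m, X j ≤ ε * ∑ j ∈ Icc 1 n, X j :=
    (sum_Ico_one_le_of_le_div hmn hn (mul_nonneg hε (hX n (mem_Icc.mpr ⟨hn, le_rfl⟩))) hhead).trans
      (by gcongr)
  linarith

theorem sum_estimates_bounds {ι : Type*} (I : Finset ι) {X : ℕ → ℝ} {a b : ι → ℕ} {δ : ℝ}
    (hδ : 0 < 1 + δ) (hR : ∀ i ∈ I, IsApproxRegion X (b i) (X (b i) / (1 + δ)) δ (a i))
    (hX : ∀ i ∈ I, ∀ j ∈ Icc (a i) (b i), 0 ≤ X j ∧ X j ≤ X (b i)) :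
    ∑ i ∈ I, ∑ j ∈ Icc (a i) (b i), X j
        ≤ (1 + δ) * ∑ i ∈ I, ((b i : ℝ) - a i + 1) * (X (b i) / (1 + δ)) ∧
      ∑ i ∈ I, ((b i : ℝ) - a i + 1) * (X (b i) / (1 + δ))
        ≤ (1 + δ) * ∑ i ∈ I, ∑ j ∈ Icc (a i) (b i), X j := by
  rw [mul_sum, mul_sum]
  constructor <;> refine sum_le_sum fun i hi => ?_
  · calc ∑ j ∈ Icc (a i) (b i), X j ≤ ((b i : ℝ) - a i + 1) * X (b i) :=
          sum_Icc_le_length_mul_right ((hR i hi).2.1.trans (b i).le_succ)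
            fun j hj => (hX i hi j hj).2
      _ = (1 + δ) * (((b i : ℝ) - a i + 1) * (X (b i) / (1 + δ))) := by field_simp
  · have hXb := (hX i hi (b i) (mem_Icc.mpr ⟨(hR i hi).2.1, le_rfl⟩)).1
    exact (hR i hi).length_mul_le_sum (div_nonneg hXb hδ.le) hδ fun j hj => (hX i hi j hj).1

theorem approximate_sum_bounds_general
    (n : ℕ) (hn : 1 ≤ n) (X : ℕ → ℝ)
    (hsorted : ∀ i j, 1 ≤ i → i ≤ j → j ≤ n → X i ≤ X j)
    (hnonneg : ∀ j, 1 ≤ j → j ≤ n → 0 ≤ X j)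
    (δ : ℝ) (hδ0 : 0 < δ)
    (t : ℕ) (ht : 1 ≤ t)
    (r r' : ℕ → ℕ)
    (hr'1 : r' 1 = n)
    (hrr' : ∀ i, 1 ≤ i → i ≤ t → r i ≤ r' i)
    (hchain : ∀ i, 1 ≤ i → i < t → r' (i + 1) = r i - 1)
    (hregion : ∀ i, 1 ≤ i → i ≤ t →
      IsApproxRegion X (r' i) (X (r' i) / (1 + δ)) δ (r i))
    (htail : ∀ j, 1 ≤ j → j < r t → X j < δ * X n / (3 * n)) :
    ((1 - δ / 3) / (1 + δ)) * (∑ j ∈ Finset.Icc 1 n, X j)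
        ≤ ∑ i ∈ Finset.Icc 1 t, ((r' i : ℝ) - (r i : ℝ) + 1) * (X (r' i) / (1 + δ))
    ∧ ∑ i ∈ Finset.Icc 1 t, ((r' i : ℝ) - (r i : ℝ) + 1) * (X (r' i) / (1 + δ))
        ≤ (1 + δ) * (∑ j ∈ Finset.Icc 1 n, X j) := by
  have hδ : 0 < 1 + δ := by linarith
  have hr1 i (h1 : 1 ≤ i) (h2 : i ≤ t) : 1 ≤ r i := (hregion i h1 h2).1
  have hle i (h1 : 1 ≤ i) (h2 : i ≤ t) : r i ≤ r' i + 1 := (hrr' i h1 h2).trans (r' i).le_succ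
  have hnext i (h1 : 1 ≤ i) (h2 : i < t) : r' (i + 1) + 1 = r i := by
    have := hchain i h1 h2
    have := hr1 i h1 h2.le
    omega
  have hr'n i (h1 : 1 ≤ i) (h2 : i ≤ t) : r' i ≤ n :=
    hr'1 ▸ right_end_le_of_consecutive hle hnext i h1 h2
  have hXI : ∀ i ∈ Icc 1 t, ∀ j ∈ Icc (r i) (r' i), 0 ≤ X j ∧ X j ≤ X (r' i) := by
    intro i hi j hj
    obtain ⟨h1, h2⟩ := mem_Icc.mp hi
    obtain ⟨hj1, hj2⟩ := mem_Icc.mp hj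
    have hj := (hr1 i h1 h2).trans hj1
    exact ⟨hnonneg j hj (hj2.trans (hr'n i h1 h2)), hsorted j _ hj hj2 (hr'n i h1 h2)⟩
  obtain ⟨hS_le, hs_le⟩ := sum_estimates_bounds (Icc 1 t) hδ
    (fun i hi => hregion i (mem_Icc.mp hi).1 (mem_Icc.mp hi).2) hXI
  rw [sum_Icc_of_consecutive X ht hle hnext, hr'1] at hS_le hs_le
  have hX : ∀ j ∈ Icc 1 n, 0 ≤ X j := fun j hj => hnonneg j (mem_Icc.mp hj).1 (mem_Icc.mp hj).2
  have hhead := one_sub_mul_sum_Icc_le (ε := δ / 3) hn (hr1 t ht le_rfl)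
    ((hle t ht le_rfl).trans (Nat.succ_le_succ (hr'n t ht le_rfl))) (by positivity) hX
    fun j hj => (htail j (mem_Ico.mp hj).1 (mem_Ico.mp hj).2).le.trans_eq (by ring)
  have hST : ∑ j ∈ Icc (r t) n, X j ≤ ∑ j ∈ Icc 1 n, X j :=
    sum_le_sum_of_subset_of_nonneg (Icc_subset_Icc_left (hr1 t ht le_rfl)) fun j hj _ => hX j hj
  constructor
  · rw [div_mul_eq_mul_div, div_le_iff₀ hδ]
    linarith
  · exact hs_le.trans (by gcongr)

theorem approximate_sum_bounds
    (n : ℕ) (hn : 1 ≤ n) (X : ℕ → ℝ)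
    (hsorted : ∀ i j, 1 ≤ i → i ≤ j → j ≤ n → X i ≤ X j)
    (hnonneg : ∀ j, 1 ≤ j → j ≤ n → 0 ≤ X j)
    (hXn : 0 < X n)
    (δ : ℝ) (hδ0 : 0 < δ) (hδ1 : δ < 1)
    (t : ℕ) (ht : 1 ≤ t)
    (r r' : ℕ → ℕ)
    (hr'1 : r' 1 = n)
    (hrr' : ∀ i, 1 ≤ i → i ≤ t → r i ≤ r' i)
    (hchain : ∀ i, 1 ≤ i → i < t → r' (i + 1) = r i - 1)
    (hregion : ∀ i, 1 ≤ i → i ≤ t →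
      IsApproxRegion X (r' i) (X (r' i) / (1 + δ)) δ (r i))
    (htail : ∀ j, 1 ≤ j → j < r t → X j < δ * X n / (3 * n)) :
    ((1 - δ / 3) / (1 + δ)) * (∑ j ∈ Finset.Icc 1 n, X j)
        ≤ ∑ i ∈ Finset.Icc 1 t, ((r' i : ℝ) - (r i : ℝ) + 1) * (X (r' i) / (1 + δ))
    ∧ ∑ i ∈ Finset.Icc 1 t, ((r' i : ℝ) - (r i : ℝ) + 1) * (X (r' i) / (1 + δ))
        ≤ (1 + δ) * (∑ j ∈ Finset.Icc 1 n, X j) :=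
  approximate_sum_bounds_general n hn X hsorted hnonneg δ hδ0 t ht r r' hr'1 hrr' hchain hregion
    htail
end

section
/- Let n' ≥ 1, let X[1..n'] be a sorted nondecreasing list of nonnegative real numbers, let δ ≥ 0, let b = X[n']/(1+δ), and let R = [r, n'] be a (1+δ)-approximate b-region of X[1..n']. Then s' = (n' − r + 1)·b satisfies s'/(1+δ) ≤ Σ_{j=r}^{n'} X[j] ≤ (1+δ)·s'. -/
/-!
Every entry of the region is at most `X n' = (1+δ) b`, which gives the upper bound. For the
lower bound, at least `|R|/(1+δ)` entries of the region are `≥ b`, and the remaining entries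
are nonnegative, so the sum is at least `|R| b/(1+δ)`.
-/

open Finset

namespace Finset

variable {ι : Type*} (s : Finset ι) (f : ι → ℝ)

lemma card_filter_le_mul_le_sum {b : ℝ} (hf : ∀ j ∈ s, 0 ≤ f j) :
    (#(s.filter fun j => b ≤ f j) : ℝ) * b ≤ ∑ j ∈ s, f j :=
  calc (#(s.filter fun j => b ≤ f j) : ℝ) * b
      ≤ ∑ j ∈ s.filter fun j => b ≤ f j, f j := by
        simpa only [nsmul_eq_mul] using card_nsmul_le_sum _ f b fun j hj => (mem_filter.mp hj).2
    _ ≤ ∑ j ∈ s, f j :=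
        sum_le_sum_of_subset_of_nonneg (filter_subset _ s) fun j hj _ => hf j hj

lemma card_mul_div_le_sum_of_card_div_le_card_filter {b c : ℝ} (hb : 0 ≤ b)
    (hf : ∀ j ∈ s, 0 ≤ f j) (hcard : (#s : ℝ) / c ≤ #(s.filter fun j => b ≤ f j)) :
    #s * b / c ≤ ∑ j ∈ s, f j :=
  calc (#s : ℝ) * b / c = #s / c * b := by ring
    _ ≤ #(s.filter fun j => b ≤ f j) * b := mul_le_mul_of_nonneg_right hcard hb
    _ ≤ ∑ j ∈ s, f j := card_filter_le_mul_le_sum s f hf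

lemma sum_le_mul_card_mul {b c : ℝ} (hf : ∀ j ∈ s, f j ≤ c * b) :
    ∑ j ∈ s, f j ≤ c * (#s * b) := by
  simpa only [nsmul_eq_mul, mul_left_comm] using sum_le_card_nsmul s f (c * b) hf

end Finset

lemma Nat.cast_card_Icc_of_le_succ {r n : ℕ} (h : r ≤ n + 1) :
    (#(Icc r n) : ℝ) = n - r + 1 := by
  rw [Nat.card_Icc, Nat.cast_sub h]
  push_cast
  ring

theorem region_sum_approximation_general
    (n' : ℕ) (X : ℕ → ℝ)
    (hsorted : ∀ i j, 1 ≤ i → i ≤ j → j ≤ n' → X i ≤ X j)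
    (hnonneg : ∀ j, 1 ≤ j → j ≤ n' → 0 ≤ X j)
    (δ : ℝ) (hδ : 0 ≤ δ)
    (r : ℕ)
    (hregion : IsApproxRegion X n' (X n' / (1 + δ)) δ r) :
    (((n' : ℝ) - (r : ℝ) + 1) * (X n' / (1 + δ))) / (1 + δ)
        ≤ ∑ j ∈ Finset.Icc r n', X j
    ∧ ∑ j ∈ Finset.Icc r n', X j
        ≤ (1 + δ) * (((n' : ℝ) - (r : ℝ) + 1) * (X n' / (1 + δ))) := by
  obtain ⟨hr1, hrn, hcard, -⟩ := hregion
  have hc : (0 : ℝ) < 1 + δ := by linarith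
  have hbounds : ∀ j ∈ Icc r n', 0 ≤ X j ∧ X j ≤ X n' := fun j hj =>
    have hj := mem_Icc.mp hj
    ⟨hnonneg j (hr1.trans hj.1) hj.2, hsorted j n' (hr1.trans hj.1) hj.2 le_rfl⟩
  have hb : 0 ≤ X n' / (1 + δ) := div_nonneg (hbounds n' (right_mem_Icc.mpr hrn)).1 hc.le
  rw [← Nat.cast_card_Icc_of_le_succ (hrn.trans n'.le_succ)] at hcard ⊢
  refine ⟨card_mul_div_le_sum_of_card_div_le_card_filter _ _ hb (fun j hj => (hbounds j hj).1)
    hcard, sum_le_mul_card_mul _ _ fun j hj => ?_⟩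
  rw [mul_div_cancel₀ _ hc.ne']
  exact (hbounds j hj).2

theorem region_sum_approximation
    (n' : ℕ) (hn' : 1 ≤ n') (X : ℕ → ℝ)
    (hsorted : ∀ i j, 1 ≤ i → i ≤ j → j ≤ n' → X i ≤ X j)
    (hnonneg : ∀ j, 1 ≤ j → j ≤ n' → 0 ≤ X j)
    (δ : ℝ) (hδ : 0 ≤ δ)
    (r : ℕ)
    (hregion : IsApproxRegion X n' (X n' / (1 + δ)) δ r) :
    (((n' : ℝ) - (r : ℝ) + 1) * (X n' / (1 + δ))) / (1 + δ)
        ≤ ∑ j ∈ Finset.Icc r n', X j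
    ∧ ∑ j ∈ Finset.Icc r n', X j
        ≤ (1 + δ) * (((n' : ℝ) - (r : ℝ) + 1) * (X n' / (1 + δ))) :=
  region_sum_approximation_general n' X hsorted hnonneg δ hδ r hregion
end

section
/- Let X : ℤ → ℝ be a nondecreasing function, let b be a real number, and let n ≥ 2 be an integer with X(n − 1) ≥ b and X(1) < b. Then there exists a natural number k such that X(n − 2^(2^k) + 1) ≥ b and X(n − 2^(2^(k+1)) + 1) < b. -/
theorem Int.exists_le_two_pow_two_pow (n : ℤ) : ∃ m : ℕ, n ≤ 2 ^ 2 ^ m := by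
  refine ⟨n.toNat, ?_⟩
  have hm : n.toNat < 2 ^ 2 ^ n.toNat :=
    Nat.lt_two_pow_self.trans_le (Nat.pow_le_pow_right two_pos Nat.lt_two_pow_self.le)
  calc n ≤ n.toNat := Int.self_le_toNat n
    _ ≤ 2 ^ 2 ^ n.toNat := by exact_mod_cast hm.le

theorem approximate_region_first_phase_general
    (X : ℤ → ℝ) (hX : Monotone X) (b : ℝ) (n : ℤ)
    (h1 : b ≤ X (n - 1)) (h2 : X 1 < b) :
    ∃ k : ℕ, b ≤ X (n - 2 ^ 2 ^ k + 1) ∧ X (n - 2 ^ 2 ^ (k + 1) + 1) < b := by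
  obtain ⟨m, hm⟩ := Int.exists_le_two_pow_two_pow n
  have below : X (n - 2 ^ 2 ^ m + 1) < b := (hX (by omega)).trans_lt h2
  have above : ¬ X (n - 2 ^ 2 ^ 0 + 1) < b := by
    rw [show n - 2 ^ 2 ^ 0 + 1 = n - 1 by ring]
    exact not_lt.2 h1
  obtain ⟨k, hk, hk1⟩ := Nat.exists_not_and_succ_of_not_zero_of_exists
    (p := fun k => X (n - 2 ^ 2 ^ k + 1) < b) above ⟨m, below⟩
  exact ⟨k, not_lt.1 hk, hk1⟩

theorem approximate_region_first_phase
    (X : ℤ → ℝ) (hX : Monotone X) (b : ℝ) (n : ℤ) (hn : 2 ≤ n)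
    (h1 : b ≤ X (n - 1)) (h2 : X 1 < b) :
    ∃ k : ℕ, b ≤ X (n - 2 ^ 2 ^ k + 1) ∧ X (n - 2 ^ 2 ^ (k + 1) + 1) < b :=
  approximate_region_first_phase_general X hX b n h1 h2
end

section
/- Let n ≥ 1 be an integer, let X[1..n] be a sorted nondecreasing list of nonnegative real numbers, let b be a real number, let δ ≥ 0, let r ≥ 1 be an integer, and let m be a real number with 1 ≤ m ≤ 1 + δ. Suppose n − r + 1 ≥ 1 with X[n − r + 1] ≥ b, and suppose that either n − ⌊m·r⌋ + 1 < 1 or X[n − ⌊m·r⌋ + 1] < b. Then the interval [max(n − ⌊m·r⌋ + 1, 1), n] is a (1+δ)-approximate b-region of X[1..n]. -/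
/-!
The window of length `r` ending at `n` lies entirely above the threshold, because `X` is sorted
and its first entry does. Stretching it to length `⌊m r⌋ ≥ r` therefore keeps at least `r` good
indices among at most `m r ≤ (1 + δ) r` ones, and since the entry just before the stretched window
is below the threshold (or does not exist), sortedness puts every good index inside it.
-/

theorem Int.le_floor_mul_of_one_le {m : ℝ} {r : ℤ} (hm : 1 ≤ m) (hr : 0 ≤ r) :
    r ≤ ⌊m * r⌋ := by
  have hr' : (0 : ℝ) ≤ r := by exact_mod_cast hr
  exact Int.le_floor.mpr (by nlinarith)

theorem card_Icc_le_card_filter_of_monotoneOn {α β : Type*} [Preorder α] [LocallyFiniteOrder α]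
    [Preorder β] [DecidableRel (α := β) (· ≤ ·)] {X : α → β} {a s t n : α} {b : β}
    (hX : MonotoneOn X (Set.Icc a n)) (hat : a ≤ t) (hst : s ≤ t) (hb : b ≤ X t) :
    (Finset.Icc t n).card ≤ ((Finset.Icc s n).filter (fun j => b ≤ X j)).card := by
  refine Finset.card_le_card fun j hj => ?_
  obtain ⟨htj, hjn⟩ := Finset.mem_Icc.mp hj
  refine Finset.mem_filter.mpr ⟨Finset.mem_Icc.mpr ⟨hst.trans htj, hjn⟩, ?_⟩
  exact hb.trans (hX ⟨hat, htj.trans hjn⟩ ⟨hat.trans htj, hjn⟩ htj)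

theorem max_le_of_lt_threshold {α β : Type*} [LinearOrder α] [Preorder β] {X : α → β}
    {a p j n : α} {b : β} (hX : MonotoneOn X (Set.Icc a n)) (hpn : p ≤ n)
    (hp : p < a ∨ X p < b) (hj : j ∈ Set.Icc a n) (hbj : b ≤ X j) : max p a ≤ j := by
  refine max_le ?_ hj.1
  rcases lt_or_ge p a with hpa | hap
  · exact hpa.le.trans hj.1
  · have hXp : X p < b := hp.resolve_left hap.not_gt
    exact (hX.reflect_lt ⟨hap, hpn⟩ hj (hXp.trans_le hbj)).le

theorem loop_exit_gives_approximate_region_general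
    (n : ℤ) (X : ℤ → ℝ)
    (hsorted : ∀ i j, 1 ≤ i → i ≤ j → j ≤ n → X i ≤ X j)
    (b δ : ℝ)
    (r : ℤ) (hr : 1 ≤ r)
    (m : ℝ) (hm1 : 1 ≤ m) (hm2 : m ≤ 1 + δ)
    (hidx : 1 ≤ n - r + 1) (hXr : b ≤ X (n - r + 1))
    (hfloor : n - ⌊m * (r : ℝ)⌋ + 1 < 1 ∨ X (n - ⌊m * (r : ℝ)⌋ + 1) < b) :
    (1 ≤ max (n - ⌊m * (r : ℝ)⌋ + 1) 1)
    ∧ (max (n - ⌊m * (r : ℝ)⌋ + 1) 1 ≤ n)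
    ∧ (((n : ℝ) - (max (n - ⌊m * (r : ℝ)⌋ + 1) 1 : ℤ) + 1) / (1 + δ)
        ≤ ((Finset.Icc (max (n - ⌊m * (r : ℝ)⌋ + 1) 1) n).filter
            (fun j => b ≤ X j)).card)
    ∧ (∀ j, 1 ≤ j → j ≤ n → b ≤ X j → max (n - ⌊m * (r : ℝ)⌋ + 1) 1 ≤ j) := by
  have hmono : MonotoneOn X (Set.Icc 1 n) := fun i hi j hj hij => hsorted i j hi.1 hij hj.2
  set F := ⌊m * (r : ℝ)⌋
  have hrF : r ≤ F := Int.le_floor_mul_of_one_le hm1 (by omega)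
  set s := max (n - F + 1) 1
  have hs : s ≤ n - r + 1 := max_le (by omega) hidx
  refine ⟨le_max_right _ _, by omega, ?_,
    fun j hj1 hjn => max_le_of_lt_threshold hmono (by omega) hfloor ⟨hj1, hjn⟩⟩
  have hcount : (r : ℝ) ≤ ((Finset.Icc s n).filter (fun j => b ≤ X j)).card := by
    have h := card_Icc_le_card_filter_of_monotoneOn hmono hidx hs hXr
    rw [Int.card_Icc, show n + 1 - (n - r + 1) = r by ring] at h
    have h' : ((r.toNat : ℤ) : ℝ) ≤ ((Finset.Icc s n).filter (fun j => b ≤ X j)).card := by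
      exact_mod_cast h
    rwa [Int.toNat_of_nonneg (by omega)] at h'
  have hlen : ((n - s + 1 : ℤ) : ℝ) ≤ F := by exact_mod_cast (by omega : n - s + 1 ≤ F)
  have hr0 : (0 : ℝ) ≤ r := by exact_mod_cast (by omega : (0 : ℤ) ≤ r)
  push_cast at hlen
  rw [div_le_iff₀ (by linarith)]
  calc (n : ℝ) - s + 1 ≤ F := hlen
    _ ≤ m * r := Int.floor_le _
    _ ≤ (1 + δ) * r := by gcongr
    _ ≤ _ := by rw [mul_comm]; gcongr; linarith

theorem loop_exit_gives_approximate_region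
    (n : ℤ) (hn : 1 ≤ n) (X : ℤ → ℝ)
    (hsorted : ∀ i j, 1 ≤ i → i ≤ j → j ≤ n → X i ≤ X j)
    (hnonneg : ∀ j, 1 ≤ j → j ≤ n → 0 ≤ X j)
    (b δ : ℝ) (hδ : 0 ≤ δ)
    (r : ℤ) (hr : 1 ≤ r)
    (m : ℝ) (hm1 : 1 ≤ m) (hm2 : m ≤ 1 + δ)
    (hidx : 1 ≤ n - r + 1) (hXr : b ≤ X (n - r + 1))
    (hfloor : n - ⌊m * (r : ℝ)⌋ + 1 < 1 ∨ X (n - ⌊m * (r : ℝ)⌋ + 1) < b) :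
    (1 ≤ max (n - ⌊m * (r : ℝ)⌋ + 1) 1)
    ∧ (max (n - ⌊m * (r : ℝ)⌋ + 1) 1 ≤ n)
    ∧ (((n : ℝ) - (max (n - ⌊m * (r : ℝ)⌋ + 1) 1 : ℤ) + 1) / (1 + δ)
        ≤ ((Finset.Icc (max (n - ⌊m * (r : ℝ)⌋ + 1) 1) n).filter
            (fun j => b ≤ X j)).card)
    ∧ (∀ j, 1 ≤ j → j ≤ n → b ≤ X j → max (n - ⌊m * (r : ℝ)⌋ + 1) 1 ≤ j) :=
  loop_exit_gives_approximate_region_general n X hsorted b δ r hr m hm1 hm2 hidx hXr hfloor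
end

section
/- Let m ≥ 2 and 1 ≤ k ≤ m be integers, and let ε > 0. Define the list L of length m+1 by L[1] = −m(m+1) and L[j] = 2(j−1) for 2 ≤ j ≤ m+1, and define L' to be identical to L except that the entry 2k is replaced by 2k+1. Then both L and L' are sorted nondecreasing, the sum of the entries of L is 0, the sum of the entries of L' is 1, and there is no real number s that is simultaneously a (1+ε)-approximation of the sum of L and a (1+ε)-approximation of the sum of L'. -/
/-!
The two lists differ by `1` in a single entry and are arranged so that `L` sums to `0` and
`L'` to `1`. A `(1+ε)`-approximation of `0` must be `0` itself, while every
`(1+ε)`-approximation of a positive number is positive, so no `s` serves for both.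
Both lists are sorted because consecutive entries of `L` are at least `1` apart, so raising one
entry by `1` cannot break the order.
-/

open Finset

def IsApprox (ε S s : ℝ) : Prop := S / (1 + ε) ≤ s ∧ s ≤ (1 + ε) * S

theorem IsApprox.eq_zero {ε s : ℝ} (h : IsApprox ε 0 s) : s = 0 :=
  le_antisymm (by simpa using h.2) (by simpa using h.1)

theorem IsApprox.pos {ε S s : ℝ} (hε : -1 < ε) (hS : 0 < S) (h : IsApprox ε S s) : 0 < s :=
  (div_pos hS (by linarith)).trans_le h.1

theorem not_exists_isApprox_zero_and_isApprox_of_pos {ε S : ℝ} (hε : -1 < ε) (hS : 0 < S) :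
    ¬ ∃ s, IsApprox ε 0 s ∧ IsApprox ε S s := by
  rintro ⟨s, h₀, hs⟩
  exact (hs.pos hε hS).ne' h₀.eq_zero

theorem monotoneOn_of_le_of_le_add {α : Type*} [PartialOrder α] {s : Set α} {f g : α → ℝ}
    {d : ℝ} (hf : ∀ i ∈ s, ∀ j ∈ s, i < j → f i + d ≤ f j) (hfg : ∀ j ∈ s, f j ≤ g j)
    (hgf : ∀ j ∈ s, g j ≤ f j + d) : MonotoneOn g s := by
  intro i hi j hj hij
  rcases hij.eq_or_lt with rfl | hlt
  · rfl
  · calc g i ≤ f i + d := hgf i hi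
      _ ≤ f j := hf i hi j hj hlt
      _ ≤ g j := hfg j hj

theorem sum_Ioc_one_two_mul_sub_one (n : ℕ) :
    ∑ j ∈ Ioc 1 (n + 1), 2 * ((j : ℝ) - 1) = n * (n + 1) := by
  induction n with
  | zero => simp
  | succ n ih =>
    rw [sum_Ioc_succ_top (by omega), ih]
    push_cast
    ring

theorem add_one_le_of_lt_of_head_eq {m : ℕ} {L : ℕ → ℝ}
    (hL1 : L 1 = -((m : ℝ) * ((m : ℝ) + 1)))
    (hLj : ∀ j, 2 ≤ j → j ≤ m + 1 → L j = 2 * ((j : ℝ) - 1)) :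
    ∀ i ∈ Set.Icc 1 (m + 1), ∀ j ∈ Set.Icc 1 (m + 1), i < j → L i + 1 ≤ L j := by
  rintro i ⟨hi1, him⟩ j ⟨-, hjm⟩ hij
  have hj : (i : ℝ) + 1 ≤ j := by exact_mod_cast hij
  rw [hLj j (by omega) hjm]
  rcases hi1.eq_or_lt with rfl | hi2
  · rw [hL1]
    push_cast at hj
    nlinarith [(m.cast_nonneg : (0 : ℝ) ≤ m)]
  · rw [hLj i hi2 him]
    linarith

theorem sum_Icc_eq_zero_of_head_eq {m : ℕ} {L : ℕ → ℝ}
    (hL1 : L 1 = -((m : ℝ) * ((m : ℝ) + 1)))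
    (hLj : ∀ j, 2 ≤ j → j ≤ m + 1 → L j = 2 * ((j : ℝ) - 1)) :
    ∑ j ∈ Icc 1 (m + 1), L j = 0 := by
  have hrest : ∑ j ∈ Ioc 1 (m + 1), L j = ∑ j ∈ Ioc 1 (m + 1), 2 * ((j : ℝ) - 1) :=
    sum_congr rfl fun j hj => hLj j (mem_Ioc.1 hj).1 (mem_Ioc.1 hj).2
  rw [Icc_eq_cons_Ioc (by omega), sum_cons, hrest, sum_Ioc_one_two_mul_sub_one, hL1]
  ring

theorem negative_element_no_approximation_general
    (m k : ℕ) (hk1 : 1 ≤ k) (hkm : k ≤ m)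
    (ε : ℝ) (hε : 0 < ε)
    (L L' : ℕ → ℝ)
    (hL1 : L 1 = -((m : ℝ) * ((m : ℝ) + 1)))
    (hLj : ∀ j, 2 ≤ j → j ≤ m + 1 → L j = 2 * ((j : ℝ) - 1))
    (hL'k : L' (k + 1) = 2 * (k : ℝ) + 1)
    (hL'j : ∀ j, 1 ≤ j → j ≤ m + 1 → j ≠ k + 1 → L' j = L j) :
    (∀ i j, 1 ≤ i → i ≤ j → j ≤ m + 1 → L i ≤ L j)
    ∧ (∀ i j, 1 ≤ i → i ≤ j → j ≤ m + 1 → L' i ≤ L' j)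
    ∧ (∑ j ∈ Finset.Icc 1 (m + 1), L j) = 0
    ∧ (∑ j ∈ Finset.Icc 1 (m + 1), L' j) = 1
    ∧ ¬ ∃ s : ℝ,
        ((∑ j ∈ Finset.Icc 1 (m + 1), L j) / (1 + ε) ≤ s
          ∧ s ≤ (1 + ε) * ∑ j ∈ Finset.Icc 1 (m + 1), L j)
        ∧ ((∑ j ∈ Finset.Icc 1 (m + 1), L' j) / (1 + ε) ≤ s
          ∧ s ≤ (1 + ε) * ∑ j ∈ Finset.Icc 1 (m + 1), L' j) := by
  have hgap := add_one_le_of_lt_of_head_eq hL1 hLj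
  have hL' : ∀ j ∈ Set.Icc 1 (m + 1), L' j = L j + if j = k + 1 then 1 else 0 := by
    rintro j ⟨hj1, hjm⟩
    split_ifs with hjk
    · rw [hjk, hL'k, hLj (k + 1) (by omega) (by omega)]
      push_cast
      ring
    · rw [hL'j j hj1 hjm hjk, add_zero]
  have hbump : ∀ j ∈ Set.Icc 1 (m + 1), L j ≤ L' j ∧ L' j ≤ L j + 1 := fun j hj => by
    rw [hL' j hj]
    split_ifs <;> norm_num
  have hsorted : ∀ {g : ℕ → ℝ}, MonotoneOn g (Set.Icc 1 (m + 1)) →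
      ∀ i j, 1 ≤ i → i ≤ j → j ≤ m + 1 → g i ≤ g j :=
    fun hg i j hi hij hj => hg ⟨hi, hij.trans hj⟩ ⟨hi.trans hij, hj⟩ hij
  have hsum := sum_Icc_eq_zero_of_head_eq hL1 hLj
  have hsum' : ∑ j ∈ Icc 1 (m + 1), L' j = 1 := by
    rw [sum_congr rfl fun j hj => hL' j (by simpa using hj), sum_add_distrib, hsum,
      sum_ite_eq' _ _ (fun _ => (1 : ℝ)), if_pos (by simp only [mem_Icc]; omega), zero_add]
  refine ⟨hsorted (monotoneOn_of_le_of_le_add hgap (fun _ _ => le_rfl) fun _ _ => by linarith),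
    hsorted (monotoneOn_of_le_of_le_add hgap (fun j hj => (hbump j hj).1)
      fun j hj => (hbump j hj).2),
    hsum, hsum', ?_⟩
  rw [hsum, hsum']
  exact not_exists_isApprox_zero_and_isApprox_of_pos (by linarith) one_pos

theorem negative_element_no_approximation
    (m k : ℕ) (hm : 2 ≤ m) (hk1 : 1 ≤ k) (hkm : k ≤ m)
    (ε : ℝ) (hε : 0 < ε)
    (L L' : ℕ → ℝ)
    (hL1 : L 1 = -((m : ℝ) * ((m : ℝ) + 1)))
    (hLj : ∀ j, 2 ≤ j → j ≤ m + 1 → L j = 2 * ((j : ℝ) - 1))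
    (hL'k : L' (k + 1) = 2 * (k : ℝ) + 1)
    (hL'j : ∀ j, 1 ≤ j → j ≤ m + 1 → j ≠ k + 1 → L' j = L j) :
    (∀ i j, 1 ≤ i → i ≤ j → j ≤ m + 1 → L i ≤ L j)
    ∧ (∀ i j, 1 ≤ i → i ≤ j → j ≤ m + 1 → L' i ≤ L' j)
    ∧ (∑ j ∈ Finset.Icc 1 (m + 1), L j) = 0
    ∧ (∑ j ∈ Finset.Icc 1 (m + 1), L' j) = 1
    ∧ ¬ ∃ s : ℝ,
        ((∑ j ∈ Finset.Icc 1 (m + 1), L j) / (1 + ε) ≤ s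
          ∧ s ≤ (1 + ε) * ∑ j ∈ Finset.Icc 1 (m + 1), L j)
        ∧ ((∑ j ∈ Finset.Icc 1 (m + 1), L' j) / (1 + ε) ≤ s
          ∧ s ≤ (1 + ε) * ∑ j ∈ Finset.Icc 1 (m + 1), L' j) :=
  negative_element_no_approximation_general m k hk1 hkm ε hε L L' hL1 hLj hL'k hL'j
end
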